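/- Let d be a negative-type distance on a finite set X, let A, B ⊆ X with |A| = |B| = k ≥ 1 and d(B) ≥ d(A), and let π : A → B be a bijection fixing A ∩ B. Then ∑_{a∈A} (d(A − a + π(a)) − d(A)) ≥ (1 − 4/k)·d(B) − d(A). -/

import Mathlib

open Finset

/-- `d` is a distance of negative type on the finite type `X`. -/
def NegType {X : Type*} [Fintype X] (d : X → X → ℝ) : Prop :=
  ∀ x : X → ℝ, ∑ i, x i = 0 → ∑ i, ∑ j, x i * d i j * x j ≤ 0

/-- The dispersion of a finite set: sum of distances over unordered pairs. -/
noncomputable def disp {X : Type*} (d : X → X → ℝ) (A : Finset X) : ℝ :=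
  (∑ a ∈ A, ∑ b ∈ A, d a b) / 2

/-- Sum of all distances between two sets. -/
def dsum {X : Type*} (d : X → X → ℝ) (A B : Finset X) : ℝ :=
  ∑ a ∈ A, ∑ b ∈ B, d a b

/-!
Only the points of `A \ B` move, and exchanging `a` for `π a` changes the dispersion by
`d(π a, A) - d(a, A) - d(a, π a)`. Summing, the left-hand side equals
`disp B - disp A + (d(A \ B, B \ A) - disp (A \ B) - disp (B \ A)) - ∑_{a ∈ A \ B} d(a, π a)`.
Testing negative type against signed combinations of indicator vectors gives, with `m = |A \ B|`,
* `m ∑ d(a, π a) ≤ disp (A \ B) + disp (B \ A) + d(A \ B, B \ A)`,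
* `disp (A \ B) + disp (B \ A) ≤ d(A \ B, B \ A)`,
* `|T| disp S ≤ |S| disp T` for `S ⊆ T`, so that `k (disp (A \ B) + disp (B \ A)) ≤ 2 m disp B`,
and these combine into the bound.
-/

theorem Set.BijOn.diff_of_fixed {α : Type*} {f : α → α} {s t : Set α} (hf : Set.BijOn f s t)
    (hfix : ∀ a ∈ s, a ∈ t → f a = a) : Set.BijOn f (s \ t) (t \ s) := by
  refine ⟨fun a ⟨has, hat⟩ ↦ ⟨hf.mapsTo has, fun hfs ↦ hat ?_⟩, hf.injOn.mono Set.sdiff_subset,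
    fun b ⟨hbt, hbs⟩ ↦ ?_⟩
  · have : f a = a := hf.injOn hfs has (hfix _ hfs (hf.mapsTo has))
    exact this ▸ hf.mapsTo has
  · obtain ⟨a, has, rfl⟩ := hf.surjOn hbt
    refine ⟨a, ⟨has, fun hat ↦ hbs ?_⟩, rfl⟩
    rwa [hfix a has hat]

section Dispersion

variable {X : Type*} {d : X → X → ℝ}

theorem disp_eq_dsum (S : Finset X) : disp d S = dsum d S S / 2 := rfl

theorem dsum_comm (hsymm : ∀ a b, d a b = d b a) (S T : Finset X) :
    dsum d S T = dsum d T S := by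
  rw [dsum, sum_comm]
  exact sum_congr rfl fun _ _ ↦ sum_congr rfl fun _ _ ↦ hsymm _ _

theorem dsum_nonneg (hnonneg : ∀ a b, 0 ≤ d a b) (S T : Finset X) : 0 ≤ dsum d S T :=
  sum_nonneg fun _ _ ↦ sum_nonneg fun _ _ ↦ hnonneg _ _

theorem disp_nonneg (hnonneg : ∀ a b, 0 ≤ d a b) (S : Finset X) : 0 ≤ disp d S :=
  div_nonneg (dsum_nonneg hnonneg S S) zero_le_two

@[simp]
theorem dsum_empty_left (T : Finset X) : dsum d ∅ T = 0 := sum_empty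

@[simp]
theorem disp_empty : disp d ∅ = 0 := by simp [disp_eq_dsum]

theorem dsum_singleton_left (a : X) (T : Finset X) : dsum d {a} T = ∑ y ∈ T, d a y := by
  simp [dsum]

theorem sum_dsum_singleton_left (S U : Finset X) : ∑ a ∈ S, dsum d {a} U = dsum d S U := by
  simp [dsum]

variable [DecidableEq X]

theorem dsum_union_left {S T : Finset X} (h : Disjoint S T) (U : Finset X) :
    dsum d (S ∪ T) U = dsum d S U + dsum d T U :=
  sum_union h

theorem dsum_union_right {S T : Finset X} (h : Disjoint S T) (U : Finset X) :
    dsum d U (S ∪ T) = dsum d U S + dsum d U T := by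
  rw [dsum, dsum, dsum, ← sum_add_distrib]
  exact sum_congr rfl fun _ _ ↦ sum_union h

theorem disp_union (hsymm : ∀ a b, d a b = d b a) {S T : Finset X} (h : Disjoint S T) :
    disp d (S ∪ T) = disp d S + disp d T + dsum d S T := by
  simp only [disp_eq_dsum, dsum_union_left h, dsum_union_right h, dsum_comm hsymm T S]
  ring

theorem disp_insert (hsymm : ∀ a b, d a b = d b a) (hdiag : ∀ a, d a a = 0) {S : Finset X}
    {b : X} (hb : b ∉ S) : disp d (insert b S) = disp d S + ∑ y ∈ S, d b y := by
  rw [insert_eq, disp_union hsymm (disjoint_singleton_left.mpr hb), dsum_singleton_left]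
  simp [disp, hdiag]

theorem disp_insert_erase (hsymm : ∀ a b, d a b = d b a) (hdiag : ∀ a, d a a = 0)
    {A : Finset X} {a b : X} (ha : a ∈ A) (hb : b ∉ A) :
    disp d (insert b (A.erase a)) = disp d A + ∑ y ∈ A, d b y - ∑ y ∈ A, d a y - d a b := by
  have hA := disp_insert hsymm hdiag (notMem_erase a A)
  rw [insert_erase ha] at hA
  rw [disp_insert hsymm hdiag (fun h ↦ hb (mem_of_mem_erase h)), hA,
    sum_erase_eq_sub ha, sum_erase_eq_sub ha, hdiag, hsymm b a]
  ring

theorem dsum_sdiff_sub_dsum_sdiff (hsymm : ∀ a b, d a b = d b a) (A B : Finset X) :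
    dsum d (B \ A) A - dsum d (A \ B) A =
      disp d B - disp d A + dsum d (A \ B) (B \ A) - disp d (A \ B) - disp d (B \ A) := by
  have hA := sdiff_union_inter A B
  have hB : B \ A ∪ A ∩ B = B := by rw [inter_comm]; exact sdiff_union_inter B A
  have hdA := disjoint_sdiff_inter A B
  have hdB : Disjoint (B \ A) (A ∩ B) := by rw [inter_comm]; exact disjoint_sdiff_inter B A
  have h1 : dsum d (B \ A) A = dsum d (B \ A) (A \ B) + dsum d (B \ A) (A ∩ B) := by
    rw [← dsum_union_right hdA, hA]
  have h2 : dsum d (A \ B) A = dsum d (A \ B) (A \ B) + dsum d (A \ B) (A ∩ B) := by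
    rw [← dsum_union_right hdA, hA]
  have h3 := disp_union hsymm hdA
  have h4 := disp_union hsymm hdB
  rw [hA] at h3
  rw [hB] at h4
  rw [h1, h2, h3, h4, dsum_comm hsymm (B \ A), disp_eq_dsum (A \ B)]
  ring

theorem sum_disp_exchange (hsymm : ∀ a b, d a b = d b a) (hdiag : ∀ a, d a a = 0)
    {A B : Finset X} {π : X → X} (hπ : Set.BijOn π ↑(A \ B) ↑(B \ A))
    (hfix : ∀ a ∈ A, a ∈ B → π a = a) :
    ∑ a ∈ A, (disp d (insert (π a) (A.erase a)) - disp d A) =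
      dsum d (B \ A) A - dsum d (A \ B) A - ∑ a ∈ A \ B, d a (π a) := by
  rw [← sum_inter_add_sum_sdiff A B]
  have hfixed : ∑ a ∈ A ∩ B, (disp d (insert (π a) (A.erase a)) - disp d A) = 0 := by
    refine sum_eq_zero fun a ha ↦ ?_
    obtain ⟨haA, haB⟩ := mem_inter.mp ha
    rw [hfix a haA haB, insert_erase haA, sub_self]
  have hmoved : ∀ a ∈ A \ B, disp d (insert (π a) (A.erase a)) - disp d A =
      dsum d {π a} A - dsum d {a} A - d a (π a) := fun a ha ↦ by
    rw [disp_insert_erase hsymm hdiag (mem_sdiff.mp ha).1 (mem_sdiff.mp (hπ.mapsTo ha)).2,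
      dsum_singleton_left, dsum_singleton_left]
    ring
  rw [hfixed, zero_add, sum_congr rfl hmoved, sum_sub_distrib, sum_sub_distrib,
    sum_dsum_singleton_left, ← sum_dsum_singleton_left (B \ A)]
  congr 2
  exact sum_nbij π (fun _ ha ↦ hπ.mapsTo ha) hπ.injOn hπ.surjOn fun _ _ ↦ rfl

end Dispersion

namespace NegType

variable {X : Type*} [Fintype X] {d : X → X → ℝ}

theorem sum_mul_mul_dsum_nonpos (hd : NegType d) {ι : Type*} [Fintype ι] (c : ι → ℝ)
    (S : ι → Finset X) (hc : ∑ i, c i * #(S i) = 0) :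
    ∑ i, ∑ j, c i * c j * dsum d (S i) (S j) ≤ 0 := by
  classical
  let x : X → ℝ := fun v ↦ ∑ i, if v ∈ S i then c i else 0
  have hx : ∑ v, x v = 0 := by
    simp only [x]
    rw [sum_comm]
    simpa [mul_comm] using hc
  calc ∑ i, ∑ j, c i * c j * dsum d (S i) (S j)
      = ∑ i, ∑ j, ∑ v, ∑ u,
          (if v ∈ S i then c i else 0) * d v u * (if u ∈ S j then c j else 0) := by
        simp [dsum, mul_sum, mul_ite, sum_ite_mem, mul_comm, mul_left_comm]
    _ = ∑ v, ∑ u, x v * d v u * x u := by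
        simp only [x, sum_mul, mul_sum]
        rw [sum_comm]
        simp_rw [sum_comm (γ := ι) (α := X)]
    _ ≤ 0 := hd x hx

theorem disp_add_disp_le_dsum (hd : NegType d) (hsymm : ∀ a b, d a b = d b a)
    {S T : Finset X} (h : #S = #T) : disp d S + disp d T ≤ dsum d S T := by
  have := hd.sum_mul_mul_dsum_nonpos ![1, -1] ![S, T] (by simp [h])
  simp only [Fin.sum_univ_two, Matrix.cons_val_zero, Matrix.cons_val_one] at this
  rw [dsum_comm hsymm T S] at this
  rw [disp_eq_dsum, disp_eq_dsum]
  linarith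

theorem disp_le_card_mul_sum_dist (hd : NegType d) (hsymm : ∀ a b, d a b = d b a)
    (hdiag : ∀ a, d a a = 0) (c : X) (T : Finset X) :
    disp d T ≤ #T * ∑ y ∈ T, d c y := by
  have := hd.sum_mul_mul_dsum_nonpos ![(#T : ℝ), -1] ![{c}, T] (by simp)
  simp only [Fin.sum_univ_two, Matrix.cons_val_zero, Matrix.cons_val_one] at this
  rw [dsum_comm hsymm T {c}, dsum_singleton_left, dsum_singleton_left, sum_singleton,
    hdiag] at this
  rw [disp_eq_dsum]
  linarith

theorem card_mul_sum_dist_le (hd : NegType d) (hsymm : ∀ a b, d a b = d b a)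
    (hdiag : ∀ a, d a a = 0) {σ : X → X} {S T : Finset X} (hσ : Set.BijOn σ S T) :
    #S * ∑ a ∈ S, d a (σ a) ≤ disp d S + disp d T + dsum d S T := by
  set m : ℝ := (#S : ℝ)
  set P := disp d S + disp d T + dsum d S T
  have hpair (a b : X) : m * m * d a b + P ≤
      m * (dsum d {a} S + dsum d {a} T + dsum d {b} S + dsum d {b} T) := by
    have := hd.sum_mul_mul_dsum_nonpos ![m, m, -1, -1] ![{a}, {b}, S, T]
      (by simp [Fin.sum_univ_four, m, hσ.finsetCard_eq])
    simp only [Fin.sum_univ_four, Matrix.cons_val_zero, Matrix.cons_val_one, Matrix.cons_val_two,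
      Matrix.cons_val_three, Matrix.tail_cons, Matrix.head_cons] at this
    rw [dsum_comm hsymm S, dsum_comm hsymm S, dsum_comm hsymm T, dsum_comm hsymm T,
      dsum_comm hsymm T S] at this
    simp only [dsum_singleton_left, sum_singleton, hdiag, hsymm b a] at this
    simp only [P, disp_eq_dsum, dsum_singleton_left]
    linarith
  have hsum := sum_le_sum fun a (_ : a ∈ S) ↦ hpair a (σ a)
  have hreindex (U : Finset X) : ∑ a ∈ S, dsum d {σ a} U = dsum d T U := by
    simp only [dsum_singleton_left]
    exact sum_nbij σ (fun _ ha ↦ hσ.mapsTo ha) hσ.injOn hσ.surjOn fun _ _ ↦ rfl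
  simp only [sum_add_distrib, ← mul_sum, hreindex, sum_dsum_singleton_left, sum_const,
    nsmul_eq_mul] at hsum
  rw [dsum_comm hsymm T S] at hsum
  rcases S.eq_empty_or_nonempty with rfl | hS
  · obtain rfl : T = ∅ := by simpa using hσ.finsetCard_eq.symm
    simp [P, disp, dsum]
  · have hm : 0 < m := by simp [m, hS.card_pos]
    refine le_of_mul_le_mul_left ?_ hm
    simp only [P, disp_eq_dsum] at hsum ⊢
    linarith

variable [DecidableEq X]

theorem card_mul_disp_le_of_subset (hd : NegType d) (hsymm : ∀ a b, d a b = d b a)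
    (hdiag : ∀ a, d a a = 0) {S T : Finset X} (hST : S ⊆ T) :
    #T * disp d S ≤ #S * disp d T := by
  set k : ℝ := (#T : ℝ)
  set m : ℝ := (#S : ℝ)
  have hquad := hd.sum_mul_mul_dsum_nonpos ![m, -k] ![T, S] (by simp; ring)
  simp only [Fin.sum_univ_two, Matrix.cons_val_zero, Matrix.cons_val_one] at hquad
  have hrest : (k - m) * disp d T ≤ k * dsum d (T \ S) T := by
    have := sum_le_sum fun c (_ : c ∈ T \ S) ↦ hd.disp_le_card_mul_sum_dist hsymm hdiag c T
    rwa [sum_const, card_sdiff_of_subset hST, nsmul_eq_mul, Nat.cast_sub (card_le_card hST),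
      ← mul_sum] at this
  have hsplit : dsum d T T = dsum d S T + dsum d (T \ S) T := by
    rw [← dsum_union_left disjoint_sdiff, union_sdiff_of_subset hST]
  rw [dsum_comm hsymm T S, show dsum d S T = dsum d T T - dsum d (T \ S) T by linarith] at hquad
  simp only [disp_eq_dsum] at hrest ⊢
  rcases (#T).eq_zero_or_pos with hT | hT
  · simp [k, m, hT, card_eq_zero.mp (by simpa [hT] using card_le_card hST : #S = 0)]
  · have hk : (0 : ℝ) < k := by positivity
    have hm : (0 : ℝ) ≤ m := by positivity
    refine le_of_mul_le_mul_left ?_ hk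
    linarith [mul_le_mul_of_nonneg_left hrest hm]

theorem sum_dist_le_of_bijOn_sdiff (hd : NegType d) (hsymm : ∀ a b, d a b = d b a)
    (hnonneg : ∀ a b, 0 ≤ d a b) (hdiag : ∀ a, d a a = 0) {A B : Finset X} (hcard : #A = #B)
    (hdisp : disp d A ≤ disp d B) {π : X → X} (hπ : Set.BijOn π ↑(A \ B) ↑(B \ A)) :
    ∑ a ∈ A \ B, d a (π a) ≤
      dsum d (A \ B) (B \ A) - disp d (A \ B) - disp d (B \ A) + 4 / #A * disp d B := by
  rcases (A \ B).eq_empty_or_nonempty with hA' | hA'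
  · obtain hB' : B \ A = ∅ := by simpa [hA'] using hπ.finsetCard_eq.symm
    simp only [hA', hB', dsum_empty_left, disp_empty, sum_empty, sub_zero, zero_add]
    exact mul_nonneg (by positivity) (disp_nonneg hnonneg B)
  · set m : ℝ := (#(A \ B) : ℝ)
    set Sm := ∑ a ∈ A \ B, d a (π a)
    have hmatch := hd.card_mul_sum_dist_le hsymm hdiag hπ
    have hpair := hd.disp_add_disp_le_dsum hsymm hπ.finsetCard_eq
    have hA := hd.card_mul_disp_le_of_subset hsymm hdiag (sdiff_subset : A \ B ⊆ A)
    have hB := hd.card_mul_disp_le_of_subset hsymm hdiag (sdiff_subset : B \ A ⊆ B)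
    rw [← hcard, ← hπ.finsetCard_eq] at hB
    set a' := disp d (A \ B)
    set b' := disp d (B \ A)
    set x := dsum d (A \ B) (B \ A)
    set k : ℝ := (#A : ℝ)
    have hm : 1 ≤ m := Nat.one_le_cast.mpr hA'.card_pos
    have hk : 0 < k := by
      have : m ≤ k := Nat.cast_le.mpr (card_le_card sdiff_subset)
      linarith
    have hmoved : k * (a' + b') ≤ 2 * m * disp d B := by
      linarith [mul_le_mul_of_nonneg_left hdisp (by linarith : 0 ≤ m)]
    have hkey : m * Sm ≤ m * (x - a' - b') + 2 * (a' + b') := by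
      linarith [mul_le_mul_of_nonneg_right hm (sub_nonneg.2 hpair)]
    have hcancel : m * (k * (4 / k * disp d B)) = 4 * m * disp d B := by field_simp
    refine le_of_mul_le_mul_left ?_ (mul_pos (by linarith : 0 < m) hk)
    linarith [mul_le_mul_of_nonneg_left hkey hk.le]

end NegType

theorem stmt_4_general {X : Type*} [Fintype X] [DecidableEq X] (d : X → X → ℝ)
    (hsymm : ∀ a b, d a b = d b a) (hnonneg : ∀ a b, 0 ≤ d a b)
    (hdiag : ∀ a, d a a = 0) (hneg : NegType d)
    (k : ℕ) (A B : Finset X) (hAcard : A.card = k) (hBcard : B.card = k)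
    (hdBA : disp d B ≥ disp d A)
    (π : X → X) (hbij : Set.BijOn π ↑A ↑B)
    (hfix : ∀ a ∈ A, a ∈ B → π a = a) :
    ∑ a ∈ A, (disp d (insert (π a) (A.erase a)) - disp d A)
      ≥ (1 - 4 / k) * disp d B - disp d A := by
  have hπ : Set.BijOn π ↑(A \ B) ↑(B \ A) := by
    simpa only [coe_sdiff] using hbij.diff_of_fixed hfix
  have hbound := hneg.sum_dist_le_of_bijOn_sdiff hsymm hnonneg hdiag
    (hAcard.trans hBcard.symm) hdBA hπ
  rw [hAcard] at hbound
  rw [sum_disp_exchange hsymm hdiag hπ hfix, dsum_sdiff_sub_dsum_sdiff hsymm]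
  linarith

theorem stmt_4 {X : Type*} [Fintype X] [DecidableEq X] (d : X → X → ℝ)
    (hsymm : ∀ a b, d a b = d b a) (hnonneg : ∀ a b, 0 ≤ d a b)
    (hdiag : ∀ a, d a a = 0) (hneg : NegType d)
    (k : ℕ) (hk : 1 ≤ k) (A B : Finset X) (hAcard : A.card = k) (hBcard : B.card = k)
    (hdBA : disp d B ≥ disp d A)
    (π : X → X) (hbij : Set.BijOn π ↑A ↑B)
    (hfix : ∀ a ∈ A, a ∈ B → π a = a) :
    ∑ a ∈ A, (disp d (insert (π a) (A.erase a)) - disp d A)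
      ≥ (1 - 4 / k) * disp d B - disp d A :=
  stmt_4_general d hsymm hnonneg hdiag hneg k A B hAcard hBcard hdBA π hbij hfix
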